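/- Let 0 < α ≤ 1 and l ∈ {1,2}, and define the Riesz transform of the kernel, K_l(x) := (2π)^{-2} ∫_{ℝ²} i (ξ_l/|ξ|) exp(i x·ξ − |ξ|^α) dξ (i.e. K_l = R_l G_α(1,·); the integral converges absolutely). Then sup_{x ∈ ℝ²} |x|² |K_l(x)| < +∞. -/

import Mathlib

open MeasureTheory

/-- The Riesz transform `R_l G_α(1,·)` of the fundamental solution, realized through
its Fourier symbol `iξ_l/|ξ|`:
`K_l(x) = (2π)^{-2} ∫ i (ξ_l/|ξ|) exp(i x·ξ - |ξ|^α) dξ`. -/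
noncomputable def rieszKernel (α : ℝ) (l : Fin 2) (x : EuclideanSpace ℝ (Fin 2)) : ℂ :=
  ((((2 * Real.pi) ^ 2)⁻¹ : ℝ) : ℂ) *
    ∫ ξ : EuclideanSpace ℝ (Fin 2),
      Complex.I * ((ξ l / ‖ξ‖ : ℝ) : ℂ) *
        Complex.exp (Complex.I * ((inner ℝ x ξ : ℝ) : ℂ) - ((‖ξ‖ ^ α : ℝ) : ℂ))

/-!
Up to the factor `i (2π)⁻²`, `K_l(x)` is the Fourier integral at `-x` of the integrable function
`F(ξ) = (ξ_l/|ξ|) e^{-|ξ|^α}`. Translating `F` by `v` multiplies its Fourier integral by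
`e^{i⟪v, -x⟫}`; for `v = (π/|x|²)(-x)` this phase is `-1`, so the third forward difference
`Δ_v³ F` has Fourier integral `(-2)³` times that of `F`, and `8 |K_l(x)| ≲ ∫ |Δ_v³ F|`.

Write `F(ξ) = ξ_l Φ(|ξ|²)` with `Φ(u) = u^{-1/2} e^{-u^{α/2}}`. Every derivative of `Φ` is of the
form `P(u^{α/2}) u^{-1/2-k} e^{-u^{α/2}}` with `P` a polynomial, hence `Φ^{(k)}(u) = O(u^{-1/2-k})`
for any `α > 0`. So the third derivative of `F` along a line is `O(|h|³/|ξ|³)`, which gives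
`|Δ_h³ F(ξ)| ≲ |h|³ (|h| + |ξ|)⁻³` (near the origin simply because `F` is bounded). By scaling,
the integral of the right-hand side over the plane is `≲ |h|²`, and `|v|² = π²/|x|²`.
-/

open Set Real Module
open scoped RealInnerProductSpace fwdDiff

section FwdDiff

variable {M G : Type*} [AddCommMonoid M] [AddCommGroup G]

lemma map_fwdDiff_iter {G' F : Type*} [AddCommGroup G'] [FunLike F G G']
    [AddMonoidHomClass F G G'] (φ : F) (h : M) (f : M → G) (n : ℕ) (y : M) :
    Δ_[h] ^[n] (fun x ↦ φ (f x)) y = φ (Δ_[h] ^[n] f y) := by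
  simp [fwdDiff_iter_eq_sum_shift, map_sum, map_zsmul]

lemma Complex.ofReal_fwdDiff_iter (h : M) (f : M → ℝ) (n : ℕ) (y : M) :
    Δ_[h] ^[n] (fun x ↦ (f x : ℂ)) y = Δ_[h] ^[n] f y := by
  simpa using map_fwdDiff_iter Complex.ofRealHom h f n y

lemma norm_fwdDiff_iter_le {E : Type*} [SeminormedAddCommGroup E] {h : M} {f : M → E} {B : ℝ}
    (hf : ∀ x, ‖f x‖ ≤ B) (n : ℕ) (y : M) : ‖Δ_[h] ^[n] f y‖ ≤ 2 ^ n * B := by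
  induction n generalizing f B with
  | zero => simpa using hf y
  | succ n ih =>
    rw [Function.iterate_succ_apply, pow_succ, mul_assoc]
    exact ih fun x ↦ (norm_sub_le _ _).trans (by linarith [hf (x + h), hf x])

lemma fwdDiff_iter_comp_add_smul {V : Type*} [AddCommGroup V] [Module ℝ V] (f : V → G)
    (ξ h : V) (n : ℕ) : Δ_[1] ^[n] (fun t : ℝ ↦ f (ξ + t • h)) 0 = Δ_[h] ^[n] f ξ := by
  simp [fwdDiff_iter_eq_sum_shift, Nat.cast_smul_eq_nsmul]

end FwdDiff

theorem norm_fwdDiff_iter_le_of_hasDerivAt {E : Type*} [NormedAddCommGroup E] [NormedSpace ℝ E]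
    {n : ℕ} {f : ℕ → ℝ → E} {a A : ℝ}
    (hf : ∀ k < n, ∀ t ∈ Icc a (a + n), HasDerivAt (f k) (f (k + 1) t) t)
    (hA : ∀ t ∈ Icc a (a + n), ‖f n t‖ ≤ A) :
    ‖Δ_[1] ^[n] (f 0) a‖ ≤ A := by
  induction n generalizing f with
  | zero => simpa using hA a (by simp)
  | succ n ih =>
    have mem : ∀ t ∈ Icc a (a + n), ∀ s ∈ Icc t (t + 1), s ∈ Icc a (a + (n + 1 : ℕ)) :=
      fun t ht s hs ↦ ⟨ht.1.trans hs.1, by push_cast; linarith [ht.2, hs.2]⟩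
    rw [Function.iterate_succ_apply]
    refine ih (f := fun k ↦ Δ_[1] (f k)) (fun k hk t ht ↦ ?_) (fun t ht ↦ ?_)
    · exact (hf k (by omega) (t + 1) (mem t ht _ (by simp))).comp_add_const t 1 |>.sub
        (hf k (by omega) t (mem t ht _ (by simp)))
    · simpa [fwdDiff] using (convex_Icc t (t + 1)).norm_image_sub_le_of_norm_hasDerivWithin_le
        (fun s hs ↦ (hf n (by omega) s (mem t ht s hs)).hasDerivWithinAt)
        (fun s hs ↦ hA s (mem t ht s hs)) (left_mem_Icc.2 (by linarith))
        (right_mem_Icc.2 (by linarith))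

theorem MeasureTheory.Integrable.fwdDiff_iter {V E : Type*} [AddCommGroup V] [MeasurableSpace V]
    [MeasurableAdd V] [NormedAddCommGroup E] {μ : Measure V} [μ.IsAddRightInvariant] {f : V → E}
    (hf : Integrable f μ) (v : V) (n : ℕ) : Integrable (Δ_[v] ^[n] f) μ := by
  induction n with
  | zero => exact hf
  | succ n ih =>
    rw [Function.iterate_succ_apply']
    exact (ih.comp_add_right v).sub ih

theorem VectorFourier.fourierIntegral_fwdDiff_iter {𝕜 V W E : Type*} [CommRing 𝕜]
    [TopologicalSpace 𝕜] [IsTopologicalRing 𝕜] [AddCommGroup V] [Module 𝕜 V] [MeasurableSpace V]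
    [TopologicalSpace V] [BorelSpace V] [MeasurableAdd V] [AddCommGroup W] [Module 𝕜 W]
    [TopologicalSpace W] [NormedAddCommGroup E] [NormedSpace ℂ E] {e : AddChar 𝕜 Circle}
    {μ : Measure V} [μ.IsAddRightInvariant] {L : V →ₗ[𝕜] W →ₗ[𝕜] 𝕜} (he : Continuous e)
    (hL : Continuous fun p : V × W ↦ L p.1 p.2) {f : V → E} (hf : Integrable f μ) (v : V)
    (n : ℕ) (w : W) :
    fourierIntegral e μ L (Δ_[v] ^[n] f) w =
      ((e (L v w) : ℂ) - 1) ^ n • fourierIntegral e μ L f w := by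
  induction n with
  | zero => simp
  | succ n ih =>
    have hg := hf.fwdDiff_iter v n
    have hshift : fourierIntegral e μ L (fun x ↦ Δ_[v] ^[n] f (x + v)) w =
        (e (L v w) : ℂ) • fourierIntegral e μ L (Δ_[v] ^[n] f) w := by
      rw [← Circle.smul_def]
      exact congrFun (fourierIntegral_comp_add_right e μ L _ v) w
    rw [Function.iterate_succ_apply', pow_succ', mul_smul, ← ih, sub_smul, one_smul, ← hshift]
    simp only [fourierIntegral, fwdDiff, smul_sub]
    exact integral_sub ((fourierIntegral_convergent_iff he hL w).2 (hg.comp_add_right v))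
      ((fourierIntegral_convergent_iff he hL w).2 hg)

theorem two_pow_mul_norm_fourierIntegral_probChar_le {V E : Type*} [NormedAddCommGroup V]
    [InnerProductSpace ℝ V] {_ : MeasurableSpace V} [BorelSpace V] {μ : Measure V}
    [μ.IsAddRightInvariant] [NormedAddCommGroup E] [NormedSpace ℂ E] {f : V → E}
    (hf : Integrable f μ) (n : ℕ) {w : V} (hw : w ≠ 0) :
    2 ^ n * ‖VectorFourier.fourierIntegral probChar μ (innerₗ V) f w‖ ≤
      ∫ ξ, ‖Δ_[(π / ‖w‖ ^ 2) • w] ^[n] f ξ‖ ∂μ := by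
  have hphase : (probChar (innerₗ V ((π / ‖w‖ ^ 2) • w) w) : ℂ) = -1 := by
    rw [innerₗ_apply_apply, real_inner_smul_left, real_inner_self_eq_norm_sq,
      div_mul_cancel₀ _ (by positivity), probChar_apply, Complex.exp_pi_mul_I]
  calc 2 ^ n * ‖VectorFourier.fourierIntegral probChar μ (innerₗ V) f w‖
      = ‖((probChar (innerₗ V ((π / ‖w‖ ^ 2) • w) w) : ℂ) - 1) ^ n •
          VectorFourier.fourierIntegral probChar μ (innerₗ V) f w‖ := by
        rw [hphase, norm_smul, norm_pow]
        norm_num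
    _ = ‖VectorFourier.fourierIntegral probChar μ (innerₗ V)
          (Δ_[(π / ‖w‖ ^ 2) • w] ^[n] f) w‖ := by
        rw [VectorFourier.fourierIntegral_fwdDiff_iter continuous_probChar
          (continuous_fst.inner continuous_snd) hf]
    _ ≤ _ := VectorFourier.norm_fourierIntegral_le_integral_norm _ _ _ _ _

section Profiles

open Polynomial

lemma Polynomial.exists_abs_eval_mul_exp_neg_le (P : ℝ[X]) :
    ∃ C, ∀ s, 0 ≤ s → |P.eval s * exp (-s)| ≤ C := by
  induction P using Polynomial.induction_on' with
  | add P Q hP hQ =>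
    obtain ⟨C₁, h₁⟩ := hP
    obtain ⟨C₂, h₂⟩ := hQ
    refine ⟨C₁ + C₂, fun s hs ↦ ?_⟩
    rw [eval_add, add_mul]
    exact (abs_add_le _ _).trans (add_le_add (h₁ s hs) (h₂ s hs))
  | monomial n a =>
    refine ⟨|a| * n.factorial, fun s hs ↦ ?_⟩
    have h := pow_div_factorial_le_exp s hs n
    rw [div_le_iff₀ (Nat.cast_pos.2 n.factorial_pos)] at h
    rw [eval_monomial, mul_assoc, abs_mul, abs_of_nonneg (a := s ^ n * exp (-s)) (by positivity)]
    refine mul_le_mul_of_nonneg_left ?_ (abs_nonneg a)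
    calc s ^ n * exp (-s) ≤ exp s * n.factorial * exp (-s) := by gcongr
      _ = n.factorial := by rw [mul_right_comm, ← exp_add, add_neg_cancel, exp_zero, one_mul]

noncomputable def expProfile (β p : ℝ) (P : ℝ[X]) (u : ℝ) : ℝ :=
  P.eval (u ^ β) * u ^ p * exp (-u ^ β)

/-- With `s = u^β`, `d/du [P(s) u^p e^{-s}] = (β s (P' - P)(s) + p P(s)) u^{p-1} e^{-s}`. -/
noncomputable def expProfile.derivPoly (β p : ℝ) (P : ℝ[X]) : ℝ[X] :=
  C β * X * (derivative P - P) + C p * P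

theorem hasDerivAt_expProfile (β p : ℝ) (P : ℝ[X]) {u : ℝ} (hu : 0 < u) :
    HasDerivAt (expProfile β p P) (expProfile β (p - 1) (expProfile.derivPoly β p P) u) u := by
  have hβ : HasDerivAt (· ^ β) (β * u ^ (β - 1)) u := hasDerivAt_rpow_const (.inl hu.ne')
  have hp : HasDerivAt (· ^ p) (p * u ^ (p - 1)) u := hasDerivAt_rpow_const (.inl hu.ne')
  refine ((((P.hasDerivAt _).comp u hβ).mul hp).mul hβ.neg.exp).congr_deriv ?_
  simp only [expProfile, expProfile.derivPoly, eval_add, eval_mul, eval_sub, eval_C, eval_X,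
    rpow_sub_one hu.ne', Function.comp_apply, Pi.mul_apply, Pi.neg_apply]
  field_simp
  ring

theorem exists_abs_expProfile_le (β p : ℝ) (P : ℝ[X]) :
    ∃ C, ∀ u, 0 < u → |expProfile β p P u| ≤ C * u ^ p := by
  obtain ⟨C, hC⟩ := P.exists_abs_eval_mul_exp_neg_le
  refine ⟨C, fun u hu ↦ ?_⟩
  calc |expProfile β p P u| = |P.eval (u ^ β) * exp (-u ^ β)| * u ^ p := by
        rw [expProfile, mul_right_comm, abs_mul, abs_of_nonneg (rpow_nonneg hu.le p)]
    _ ≤ C * u ^ p := by gcongr; exact hC _ (rpow_nonneg hu.le β)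

noncomputable def radialPoly (β : ℝ) : ℕ → ℝ[X]
  | 0 => 1
  | k + 1 => expProfile.derivPoly β (-1 / 2 - k) (radialPoly β k)

noncomputable def radialProfile (β : ℝ) (k : ℕ) : ℝ → ℝ :=
  expProfile β (-1 / 2 - k) (radialPoly β k)

theorem radialProfile_zero (β u : ℝ) :
    radialProfile β 0 u = u ^ (-1 / 2 : ℝ) * exp (-u ^ β) := by
  simp [radialProfile, radialPoly, expProfile]

theorem hasDerivAt_radialProfile (β : ℝ) (k : ℕ) {u : ℝ} (hu : 0 < u) :
    HasDerivAt (radialProfile β k) (radialProfile β (k + 1) u) u := by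
  have h := hasDerivAt_expProfile β (-1 / 2 - k) (radialPoly β k) hu
  rwa [show -1 / 2 - (k : ℝ) - 1 = -1 / 2 - ((k + 1 : ℕ) : ℝ) by push_cast; ring] at h

theorem exists_abs_radialProfile_sq_le (β : ℝ) (k : ℕ) :
    ∃ M, ∀ ρ, 0 < ρ → |radialProfile β k (ρ ^ 2)| ≤ M / ρ ^ (2 * k + 1) := by
  obtain ⟨M, hM⟩ := exists_abs_expProfile_le β (-1 / 2 - k) (radialPoly β k)
  refine ⟨M, fun ρ hρ ↦ (hM _ (by positivity)).trans_eq ?_⟩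
  rw [← rpow_natCast ρ 2, ← rpow_mul hρ.le, div_eq_mul_inv M, ← rpow_natCast, ← rpow_neg hρ.le]
  push_cast
  ring_nf

theorem exists_uniform_abs_radialProfile_sq_le (β : ℝ) (n : ℕ) :
    ∃ M, ∀ k ≤ n, ∀ ρ, 0 < ρ → |radialProfile β k (ρ ^ 2)| ≤ M / ρ ^ (2 * k + 1) := by
  induction n with
  | zero =>
    obtain ⟨M, hM⟩ := exists_abs_radialProfile_sq_le β 0
    exact ⟨M, fun k hk ↦ Nat.le_zero.1 hk ▸ hM⟩
  | succ n ih =>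
    obtain ⟨M, hM⟩ := ih
    obtain ⟨M', hM'⟩ := exists_abs_radialProfile_sq_le β (n + 1)
    refine ⟨max M M', fun k hk ρ hρ ↦ ?_⟩
    rcases Nat.le_succ_iff.1 hk with hk | rfl
    · exact (hM k hk ρ hρ).trans (by gcongr; exact le_max_left _ _)
    · exact (hM' ρ hρ).trans (by gcongr; exact le_max_right _ _)

end Profiles

lemma add_norm_div_five_le_norm_add_smul {E : Type*} [NormedAddCommGroup E] [NormedSpace ℝ E]
    {ξ h : E} (hξ : 4 * ‖h‖ ≤ ‖ξ‖) {t : ℝ} (ht : t ∈ Icc (0 : ℝ) 3) :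
    (‖h‖ + ‖ξ‖) / 5 ≤ ‖ξ + t • h‖ := by
  have h₁ : ‖t • h‖ ≤ 3 * ‖h‖ := by
    rw [norm_smul, Real.norm_of_nonneg ht.1]
    gcongr
    exact ht.2
  have h₂ : ‖ξ‖ ≤ ‖ξ + t • h‖ + ‖t • h‖ := by simpa using norm_sub_le (ξ + t • h) (t • h)
  linarith

section RadialFunction

variable {E : Type*} [NormedAddCommGroup E] [InnerProductSpace ℝ E] {Φ : ℕ → ℝ → ℝ} {M : ℝ}
  (hΦ : ∀ k u, 0 < u → HasDerivAt (Φ k) (Φ (k + 1) u) u)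
  (hΦM : ∀ k ≤ 3, ∀ ρ, 0 < ρ → |Φ k (ρ ^ 2)| ≤ M / ρ ^ (2 * k + 1))

/-- For `k ≤ 3`, the `k`-th derivative of `t ↦ Φ 0 ‖η + t • h‖²` at `t = 0` when each `Φ (j + 1)`
is the derivative of `Φ j` (all `k ≥ 3` give the third one). -/
noncomputable def sqNormDeriv (Φ : ℕ → ℝ → ℝ) (h : E) : ℕ → E → ℝ
  | 0, η => Φ 0 (‖η‖ ^ 2)
  | 1, η => Φ 1 (‖η‖ ^ 2) * (2 * ⟪η, h⟫)
  | 2, η => Φ 2 (‖η‖ ^ 2) * (2 * ⟪η, h⟫) ^ 2 + Φ 1 (‖η‖ ^ 2) * (2 * ‖h‖ ^ 2)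
  | _, η => Φ 3 (‖η‖ ^ 2) * (2 * ⟪η, h⟫) ^ 3 + 3 * Φ 2 (‖η‖ ^ 2) * (2 * ⟪η, h⟫) * (2 * ‖h‖ ^ 2)

/-- Leibniz's rule for `t ↦ L (η + t • h) * Φ 0 ‖η + t • h‖²`, whose first factor is affine. -/
noncomputable def radialLineDeriv (L : StrongDual ℝ E) (Φ : ℕ → ℝ → ℝ) (h : E) (k : ℕ)
    (η : E) : ℝ :=
  L η * sqNormDeriv Φ h k η + k * L h * sqNormDeriv Φ h (k - 1) η

include hΦ in
theorem hasDerivAt_sqNormDeriv (ξ h : E) {k : ℕ} (hk : k < 3) {t : ℝ} (ht : ξ + t • h ≠ 0) :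
    HasDerivAt (fun s ↦ sqNormDeriv Φ h k (ξ + s • h))
      (sqNormDeriv Φ h (k + 1) (ξ + t • h)) t := by
  have hγ : HasDerivAt (fun s : ℝ ↦ ξ + s • h) h t := by
    simpa using ((hasDerivAt_id t).smul_const h).const_add ξ
  have hp : HasDerivAt (fun s ↦ 2 * ⟪ξ + s • h, h⟫) (2 * ‖h‖ ^ 2) t := by
    simpa [real_inner_self_eq_norm_sq] using (hγ.inner ℝ (hasDerivAt_const t h)).const_mul 2
  have hΦq : ∀ j, HasDerivAt (fun s ↦ Φ j (‖ξ + s • h‖ ^ 2))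
      (Φ (j + 1) (‖ξ + t • h‖ ^ 2) * (2 * ⟪ξ + t • h, h⟫)) t :=
    fun j ↦ (hΦ j _ (by positivity)).comp t hγ.norm_sq
  interval_cases k
  · exact hΦq 0
  · exact ((hΦq 1).mul hp).congr_deriv (by simp only [sqNormDeriv]; ring)
  · exact (((hΦq 2).mul (hp.pow 2)).add ((hΦq 1).mul_const _)).congr_deriv
      (by simp only [sqNormDeriv, Pi.pow_apply]; ring)

include hΦ in
theorem hasDerivAt_radialLineDeriv (L : StrongDual ℝ E) (ξ h : E) {k : ℕ} (hk : k < 3) {t : ℝ}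
    (ht : ξ + t • h ≠ 0) :
    HasDerivAt (fun s ↦ radialLineDeriv L Φ h k (ξ + s • h))
      (radialLineDeriv L Φ h (k + 1) (ξ + t • h)) t := by
  have hℓ : HasDerivAt (fun s : ℝ ↦ L (ξ + s • h)) (L h) t := by
    simpa using ((hasDerivAt_id t).smul_const (L h)).const_add (L ξ)
  refine ((hℓ.mul (hasDerivAt_sqNormDeriv hΦ ξ h hk ht)).add
    ((hasDerivAt_sqNormDeriv hΦ ξ h (k := k - 1) (by omega) ht).const_mul
      (k * L h))).congr_deriv ?_
  rcases k with _ | k <;> simp [radialLineDeriv] <;> ring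

include hΦM in
theorem nonneg_of_abs_sq_le : 0 ≤ M := by
  simpa using (abs_nonneg _).trans (hΦM 0 (by norm_num) 1 one_pos)

include hΦM in
theorem norm_mul_sq_norm_le (L : StrongDual ℝ E) (η : E) :
    ‖L η * Φ 0 (‖η‖ ^ 2)‖ ≤ M * ‖L‖ := by
  rcases eq_or_ne η 0 with rfl | hη
  · simpa using mul_nonneg (nonneg_of_abs_sq_le hΦM) (norm_nonneg L)
  have hρ : 0 < ‖η‖ := norm_pos_iff.2 hη
  calc ‖L η * Φ 0 (‖η‖ ^ 2)‖ ≤ ‖L‖ * ‖η‖ * (M / ‖η‖ ^ 1) := by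
        rw [norm_mul, Real.norm_eq_abs (Φ 0 _)]
        gcongr
        · exact L.le_opNorm η
        · exact hΦM 0 (by norm_num) _ hρ
    _ = M * ‖L‖ := by field_simp

include hΦM in
theorem abs_sqNormDeriv_two_le (h : E) {η : E} (hη : η ≠ 0) :
    |sqNormDeriv Φ h 2 η| ≤ 6 * M * ‖h‖ ^ 2 / ‖η‖ ^ 3 := by
  have hρ : 0 < ‖η‖ := norm_pos_iff.2 hη
  have := nonneg_of_abs_sq_le hΦM
  have hp : |2 * ⟪η, h⟫| ≤ 2 * ‖η‖ * ‖h‖ := by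
    rw [abs_mul, abs_two, mul_assoc]
    gcongr
    exact abs_real_inner_le_norm η h
  have b₁ : |Φ 1 (‖η‖ ^ 2)| ≤ M / ‖η‖ ^ 3 := hΦM 1 (by norm_num) _ hρ
  have b₂ : |Φ 2 (‖η‖ ^ 2)| ≤ M / ‖η‖ ^ 5 := hΦM 2 (by norm_num) _ hρ
  calc |sqNormDeriv Φ h 2 η|
      ≤ |Φ 2 (‖η‖ ^ 2)| * |2 * ⟪η, h⟫| ^ 2 + |Φ 1 (‖η‖ ^ 2)| * (2 * ‖h‖ ^ 2) := by
        refine (abs_add_le _ _).trans_eq ?_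
        rw [abs_mul, abs_mul, abs_pow, abs_of_nonneg (by positivity : (0 : ℝ) ≤ 2 * ‖h‖ ^ 2)]
    _ ≤ M / ‖η‖ ^ 5 * (2 * ‖η‖ * ‖h‖) ^ 2 + M / ‖η‖ ^ 3 * (2 * ‖h‖ ^ 2) := by gcongr
    _ = 6 * M * ‖h‖ ^ 2 / ‖η‖ ^ 3 := by field_simp; ring

include hΦM in
theorem abs_sqNormDeriv_three_le (h : E) {η : E} (hη : η ≠ 0) :
    |sqNormDeriv Φ h 3 η| ≤ 20 * M * ‖h‖ ^ 3 / ‖η‖ ^ 4 := by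
  have hρ : 0 < ‖η‖ := norm_pos_iff.2 hη
  have := nonneg_of_abs_sq_le hΦM
  have hp : |2 * ⟪η, h⟫| ≤ 2 * ‖η‖ * ‖h‖ := by
    rw [abs_mul, abs_two, mul_assoc]
    gcongr
    exact abs_real_inner_le_norm η h
  have b₂ : |Φ 2 (‖η‖ ^ 2)| ≤ M / ‖η‖ ^ 5 := hΦM 2 (by norm_num) _ hρ
  have b₃ : |Φ 3 (‖η‖ ^ 2)| ≤ M / ‖η‖ ^ 7 := hΦM 3 le_rfl _ hρ
  calc |sqNormDeriv Φ h 3 η|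
      ≤ |Φ 3 (‖η‖ ^ 2)| * |2 * ⟪η, h⟫| ^ 3
          + 3 * |Φ 2 (‖η‖ ^ 2)| * |2 * ⟪η, h⟫| * (2 * ‖h‖ ^ 2) := by
        refine (abs_add_le _ _).trans_eq ?_
        rw [abs_mul, abs_mul, abs_mul, abs_mul, abs_pow, abs_of_pos (three_pos : (0 : ℝ) < 3),
          abs_of_nonneg (by positivity : (0 : ℝ) ≤ 2 * ‖h‖ ^ 2)]
    _ ≤ M / ‖η‖ ^ 7 * (2 * ‖η‖ * ‖h‖) ^ 3
          + 3 * (M / ‖η‖ ^ 5) * (2 * ‖η‖ * ‖h‖) * (2 * ‖h‖ ^ 2) := by gcongr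
    _ = 20 * M * ‖h‖ ^ 3 / ‖η‖ ^ 4 := by field_simp; ring

include hΦM in
theorem abs_radialLineDeriv_three_le (L : StrongDual ℝ E) (h : E) {η : E} (hη : η ≠ 0) :
    |radialLineDeriv L Φ h 3 η| ≤ 38 * M * ‖L‖ * ‖h‖ ^ 3 / ‖η‖ ^ 3 := by
  have hρ : 0 < ‖η‖ := norm_pos_iff.2 hη
  have := nonneg_of_abs_sq_le hΦM
  have hL : ∀ v, |L v| ≤ ‖L‖ * ‖v‖ := L.le_opNorm
  calc |radialLineDeriv L Φ h 3 η|
      ≤ ‖L‖ * ‖η‖ * |sqNormDeriv Φ h 3 η| + 3 * (‖L‖ * ‖h‖) * |sqNormDeriv Φ h 2 η| := by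
        simp only [radialLineDeriv, Nat.cast_ofNat, Nat.reduceSub]
        refine (abs_add_le _ _).trans ?_
        rw [abs_mul, abs_mul, abs_mul, abs_of_pos (three_pos : (0 : ℝ) < 3)]
        gcongr
        exacts [hL η, hL h]
    _ ≤ ‖L‖ * ‖η‖ * (20 * M * ‖h‖ ^ 3 / ‖η‖ ^ 4)
          + 3 * (‖L‖ * ‖h‖) * (6 * M * ‖h‖ ^ 2 / ‖η‖ ^ 3) := by
        gcongr
        exacts [abs_sqNormDeriv_three_le hΦM h hη, abs_sqNormDeriv_two_le hΦM h hη]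
    _ = 38 * M * ‖L‖ * ‖h‖ ^ 3 / ‖η‖ ^ 3 := by field_simp; ring

include hΦ hΦM in
theorem abs_fwdDiff_iter_three_mul_sq_norm_le (L : StrongDual ℝ E) (ξ : E) {h : E}
    (hh : h ≠ 0) :
    |Δ_[h] ^[3] (fun η ↦ L η * Φ 0 (‖η‖ ^ 2)) ξ| ≤
      4750 * M * ‖L‖ * ‖h‖ ^ 3 / (‖h‖ + ‖ξ‖) ^ 3 := by
  have hM := nonneg_of_abs_sq_le hΦM
  have hh' : 0 < ‖h‖ := norm_pos_iff.2 hh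
  rw [← Real.norm_eq_abs]
  rcases lt_or_ge ‖ξ‖ (4 * ‖h‖) with hnear | hfar
  · calc _ ≤ 2 ^ 3 * (M * ‖L‖) := norm_fwdDiff_iter_le (norm_mul_sq_norm_le hΦM L) 3 ξ
      _ ≤ 4750 * M * ‖L‖ * ‖h‖ ^ 3 / (‖h‖ + ‖ξ‖) ^ 3 := by
          rw [le_div_iff₀ (by positivity)]
          have : (‖h‖ + ‖ξ‖) ^ 3 ≤ (5 * ‖h‖) ^ 3 := by gcongr; linarith
          nlinarith [mul_le_mul_of_nonneg_left this (mul_nonneg hM (norm_nonneg L)),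
            mul_nonneg (mul_nonneg hM (norm_nonneg L)) (pow_nonneg hh'.le 3)]
  have hseg : ∀ t ∈ Icc (0 : ℝ) (0 + (3 : ℕ)), (‖h‖ + ‖ξ‖) / 5 ≤ ‖ξ + t • h‖ :=
    fun t ht ↦ add_norm_div_five_le_norm_add_smul hfar (by simpa using ht)
  have hne : ∀ t ∈ Icc (0 : ℝ) (0 + (3 : ℕ)), ξ + t • h ≠ 0 := fun t ht ↦
    norm_pos_iff.1 ((by positivity : 0 < (‖h‖ + ‖ξ‖) / 5).trans_le (hseg t ht))
  rw [← fwdDiff_iter_comp_add_smul]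
  refine norm_fwdDiff_iter_le_of_hasDerivAt (f := fun k t ↦ radialLineDeriv L Φ h k (ξ + t • h))
    (fun k hk t ht ↦ hasDerivAt_radialLineDeriv hΦ L ξ h hk (hne t ht)) (fun t ht ↦ ?_)
    |>.trans_eq' (by simp [radialLineDeriv, sqNormDeriv])
  calc ‖radialLineDeriv L Φ h 3 (ξ + t • h)‖
      ≤ 38 * M * ‖L‖ * ‖h‖ ^ 3 / ‖ξ + t • h‖ ^ 3 :=
        abs_radialLineDeriv_three_le hΦM L h (hne t ht)
    _ ≤ 38 * M * ‖L‖ * ‖h‖ ^ 3 / ((‖h‖ + ‖ξ‖) / 5) ^ 3 := by gcongr; exact hseg t ht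
    _ = 4750 * M * ‖L‖ * ‖h‖ ^ 3 / (‖h‖ + ‖ξ‖) ^ 3 := by field_simp; ring

end RadialFunction

section Scaling

variable {E : Type*} [NormedAddCommGroup E] [NormedSpace ℝ E] [FiniteDimensional ℝ E]
  {_ : MeasurableSpace E} [BorelSpace E] (μ : Measure E) [μ.IsAddHaarMeasure]

omit [FiniteDimensional ℝ E] [BorelSpace E] in
lemma pow_mul_inv_add_norm_pow {s : ℝ} (hs : 0 < s) (n : ℕ) (ξ : E) :
    s ^ n * ((s + ‖ξ‖) ^ n)⁻¹ = ((1 + ‖s⁻¹ • ξ‖) ^ n)⁻¹ := by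
  have : 1 + s⁻¹ * ‖ξ‖ = s⁻¹ * (s + ‖ξ‖) := by field_simp
  rw [norm_smul, Real.norm_of_nonneg (inv_nonneg.2 hs.le), this, mul_pow, mul_inv, inv_pow,
    inv_inv]

theorem integrable_inv_one_add_norm_pow {n : ℕ} (hn : finrank ℝ E < n) :
    Integrable (fun ξ : E ↦ ((1 + ‖ξ‖) ^ n)⁻¹) μ := by
  simpa [rpow_neg, rpow_natCast] using
    integrable_one_add_norm (μ := μ) (r := n) (by exact_mod_cast hn)

theorem integrable_inv_add_norm_pow {s : ℝ} (hs : 0 < s) {n : ℕ} (hn : finrank ℝ E < n) :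
    Integrable (fun ξ : E ↦ ((s + ‖ξ‖) ^ n)⁻¹) μ := by
  refine (((integrable_inv_one_add_norm_pow μ hn).comp_smul (inv_ne_zero hs.ne')).const_mul
    (s ^ n)⁻¹).congr (ae_of_all _ fun ξ ↦ ?_)
  simp only [← pow_mul_inv_add_norm_pow hs]
  field_simp

theorem pow_mul_integral_inv_add_norm_pow {s : ℝ} (hs : 0 < s) (n : ℕ) :
    s ^ n * ∫ ξ, ((s + ‖ξ‖) ^ n)⁻¹ ∂μ = s ^ finrank ℝ E * ∫ ξ, ((1 + ‖ξ‖) ^ n)⁻¹ ∂μ := by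
  rw [← integral_const_mul]
  simp_rw [pow_mul_inv_add_norm_pow hs]
  rw [Measure.integral_comp_inv_smul_of_nonneg μ (fun ξ ↦ ((1 + ‖ξ‖) ^ n)⁻¹) hs.le, smul_eq_mul]

theorem integrable_exp_neg_norm_rpow [Nontrivial E] {p : ℝ} (hp : 0 < p) :
    Integrable (fun ξ : E ↦ exp (-‖ξ‖ ^ p)) μ := by
  rw [integrable_fun_norm_addHaar μ (f := fun y ↦ exp (-y ^ p))]
  refine (integrableOn_rpow_mul_exp_neg_rpow (s := (finrank ℝ E - 1 : ℕ))
    (by linarith [Nat.cast_nonneg (α := ℝ) (finrank ℝ E - 1)]) hp).congr_fun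
    (fun y _ ↦ by simp [rpow_natCast]) measurableSet_Ioi

end Scaling

theorem integral_abs_fwdDiff_iter_three_mul_sq_norm_le {E : Type*} [NormedAddCommGroup E]
    [InnerProductSpace ℝ E] [FiniteDimensional ℝ E] {_ : MeasurableSpace E} [BorelSpace E]
    (μ : Measure E) [μ.IsAddHaarMeasure] (hE : finrank ℝ E < 3) {Φ : ℕ → ℝ → ℝ} {M : ℝ}
    (hΦ : ∀ k u, 0 < u → HasDerivAt (Φ k) (Φ (k + 1) u) u)
    (hΦM : ∀ k ≤ 3, ∀ ρ, 0 < ρ → |Φ k (ρ ^ 2)| ≤ M / ρ ^ (2 * k + 1))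
    (L : StrongDual ℝ E) {h : E} (hh : h ≠ 0) :
    ∫ ξ, |Δ_[h] ^[3] (fun η ↦ L η * Φ 0 (‖η‖ ^ 2)) ξ| ∂μ ≤
      4750 * M * ‖L‖ * ‖h‖ ^ finrank ℝ E * ∫ ξ, ((1 + ‖ξ‖) ^ 3)⁻¹ ∂μ := by
  have hh' : 0 < ‖h‖ := norm_pos_iff.2 hh
  calc ∫ ξ, |Δ_[h] ^[3] (fun η ↦ L η * Φ 0 (‖η‖ ^ 2)) ξ| ∂μ
      ≤ ∫ ξ, 4750 * M * ‖L‖ * (‖h‖ ^ 3 * ((‖h‖ + ‖ξ‖) ^ 3)⁻¹) ∂μ :=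
        integral_mono_of_nonneg (ae_of_all _ fun _ ↦ abs_nonneg _)
          (((integrable_inv_add_norm_pow μ hh' hE).const_mul _).const_mul _)
          (ae_of_all _ fun ξ ↦ (abs_fwdDiff_iter_three_mul_sq_norm_le hΦ hΦM L ξ hh).trans_eq
            (by ring))
    _ = 4750 * M * ‖L‖ * ‖h‖ ^ finrank ℝ E * ∫ ξ, ((1 + ‖ξ‖) ^ 3)⁻¹ ∂μ := by
        rw [integral_const_mul, integral_const_mul, pow_mul_integral_inv_add_norm_pow μ hh']
        ring

noncomputable def rieszMultiplier (α : ℝ) (l : Fin 2) (ξ : EuclideanSpace ℝ (Fin 2)) : ℝ :=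
  ξ l / ‖ξ‖ * exp (-‖ξ‖ ^ α)

theorem rieszMultiplier_eq (α : ℝ) (l : Fin 2) :
    rieszMultiplier α l =
      fun ξ ↦ EuclideanSpace.proj l ξ * radialProfile (α / 2) 0 (‖ξ‖ ^ 2) := by
  ext ξ
  have h₁ : (‖ξ‖ ^ 2) ^ (-1 / 2 : ℝ) = ‖ξ‖⁻¹ := by
    rw [← rpow_natCast, ← rpow_mul (norm_nonneg ξ)]
    norm_num [rpow_neg_one]
  have h₂ : (‖ξ‖ ^ 2) ^ (α / 2) = ‖ξ‖ ^ α := by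
    rw [← rpow_natCast, ← rpow_mul (norm_nonneg ξ)]
    ring_nf
  rw [rieszMultiplier, radialProfile_zero, h₁, h₂, div_eq_mul_inv, mul_assoc]
  rfl

theorem integrable_rieszMultiplier {α : ℝ} (hα : 0 < α) (l : Fin 2) :
    Integrable (rieszMultiplier α l) := by
  refine (integrable_exp_neg_norm_rpow volume hα).mono' ?_ (ae_of_all _ fun ξ ↦ ?_)
  · exact (((EuclideanSpace.proj l).continuous.measurable.div measurable_norm).mul
      (measurable_norm.pow_const α).neg.exp).aestronglyMeasurable
  · rw [rieszMultiplier, norm_mul, Real.norm_of_nonneg (exp_pos _).le]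
    refine mul_le_of_le_one_left (exp_pos _).le ?_
    rw [norm_div, norm_norm]
    exact div_le_one_of_le₀ (PiLp.norm_apply_le ξ l) (norm_nonneg ξ)

theorem exists_integral_abs_fwdDiff_iter_rieszMultiplier_le (α : ℝ) (l : Fin 2) :
    ∃ A, 0 ≤ A ∧ ∀ v ≠ 0, ∫ ξ, |Δ_[v] ^[3] (rieszMultiplier α l) ξ| ≤ A * ‖v‖ ^ 2 := by
  obtain ⟨M, hM⟩ := exists_uniform_abs_radialProfile_sq_le (α / 2) 3
  refine ⟨4750 * M * ‖EuclideanSpace.proj (𝕜 := ℝ) l‖ *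
      ∫ ξ : EuclideanSpace ℝ (Fin 2), ((1 + ‖ξ‖) ^ 3)⁻¹,
    by have := nonneg_of_abs_sq_le hM; positivity, fun v hv ↦ ?_⟩
  have h := integral_abs_fwdDiff_iter_three_mul_sq_norm_le volume (by simp)
    (fun k u hu ↦ hasDerivAt_radialProfile _ k hu) hM (EuclideanSpace.proj l) hv
  rw [finrank_euclideanSpace_fin] at h
  rw [rieszMultiplier_eq]
  exact h.trans_eq (by ring)

theorem rieszKernel_eq_fourierIntegral (α : ℝ) (l : Fin 2) (x : EuclideanSpace ℝ (Fin 2)) :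
    rieszKernel α l x = ((((2 * π) ^ 2)⁻¹ : ℝ) : ℂ) * (Complex.I *
      VectorFourier.fourierIntegral probChar volume (innerₗ _)
        (fun ξ ↦ (rieszMultiplier α l ξ : ℂ)) (-x)) := by
  rw [rieszKernel, VectorFourier.fourierIntegral_probChar, ← integral_const_mul Complex.I]
  congr 2
  funext ξ
  simp only [rieszMultiplier, innerₗ_apply_apply, inner_neg_right, real_inner_comm ξ x,
    smul_eq_mul, Complex.ofReal_mul, Complex.ofReal_exp, Complex.ofReal_neg, sub_eq_add_neg,
    Complex.exp_add]
  ring_nf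

theorem norm_rieszKernel_le {α : ℝ} (hα : 0 < α) (l : Fin 2) {x : EuclideanSpace ℝ (Fin 2)}
    (hx : x ≠ 0) :
    ‖rieszKernel α l x‖ ≤
      ((2 * π) ^ 2)⁻¹ / 8 * ∫ ξ, |Δ_[(π / ‖x‖ ^ 2) • -x] ^[3] (rieszMultiplier α l) ξ| := by
  have hF := two_pow_mul_norm_fourierIntegral_probChar_le (μ := volume)
    (f := fun ξ ↦ (rieszMultiplier α l ξ : ℂ)) (integrable_rieszMultiplier hα l).ofReal 3
    (neg_ne_zero.2 hx)
  simp only [norm_neg, Complex.ofReal_fwdDiff_iter, Complex.norm_real, Real.norm_eq_abs] at hF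
  rw [rieszKernel_eq_fourierIntegral, norm_mul, norm_mul, Complex.norm_I, one_mul,
    Complex.norm_real, Real.norm_of_nonneg (by positivity)]
  calc ((2 * π) ^ 2)⁻¹ * ‖VectorFourier.fourierIntegral probChar volume (innerₗ _)
        (fun ξ ↦ (rieszMultiplier α l ξ : ℂ)) (-x)‖
      = ((2 * π) ^ 2)⁻¹ / 8 * (2 ^ 3 * ‖VectorFourier.fourierIntegral probChar volume
          (innerₗ _) (fun ξ ↦ (rieszMultiplier α l ξ : ℂ)) (-x)‖) := by ring
    _ ≤ _ := by gcongr

theorem riesz_kernel_weighted_bound_general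
    (α : ℝ) (hα : 0 < α) (l : Fin 2) :
    ∃ C : ℝ, ∀ x : EuclideanSpace ℝ (Fin 2),
      ‖x‖ ^ 2 * ‖rieszKernel α l x‖ ≤ C := by
  obtain ⟨A, hA, hdiff⟩ := exists_integral_abs_fwdDiff_iter_rieszMultiplier_le α l
  refine ⟨((2 * π) ^ 2)⁻¹ / 8 * (A * π ^ 2), fun x ↦ ?_⟩
  rcases eq_or_ne x 0 with rfl | hx
  · rw [norm_zero, zero_pow two_ne_zero, zero_mul]
    positivity
  have hv : ‖(π / ‖x‖ ^ 2) • -x‖ = π / ‖x‖ := by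
    rw [norm_smul, norm_neg, Real.norm_of_nonneg (by positivity)]
    field_simp
  have hv₀ : (π / ‖x‖ ^ 2) • -x ≠ 0 := norm_ne_zero_iff.1 (by rw [hv]; positivity)
  calc ‖x‖ ^ 2 * ‖rieszKernel α l x‖
      ≤ ‖x‖ ^ 2 * (((2 * π) ^ 2)⁻¹ / 8 * (A * ‖(π / ‖x‖ ^ 2) • -x‖ ^ 2)) := by
        gcongr
        exact (norm_rieszKernel_le hα l hx).trans (by gcongr; exact hdiff _ hv₀)
    _ = ((2 * π) ^ 2)⁻¹ / 8 * (A * π ^ 2) := by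
        rw [hv]
        field_simp

/-- For `0 < α ≤ 1` and `l ∈ {1,2}`, `sup_x |x|² |R_l G_α(1,x)| < ∞`. -/
theorem riesz_kernel_weighted_bound
    (α : ℝ) (hα : 0 < α) (hα1 : α ≤ 1) (l : Fin 2) :
    ∃ C : ℝ, ∀ x : EuclideanSpace ℝ (Fin 2),
      ‖x‖ ^ 2 * ‖rieszKernel α l x‖ ≤ C :=
  riesz_kernel_weighted_bound_general α hα l
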